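/- arXiv:math/0207307 — 5 statements merged into one kernel-verified Lean document; each statement's English description precedes it below -/
import Mathlib

section
/- Let G be a finite 2-group with generators a₁, a₂, a₃ satisfying (modulo G₃ = [G,G']): a₁² ≡ 1, a₂² ≡ c₁₂c₁₃, a₃² ≡ c₁₂, c₂₃ ∈ G₃, where c_{ij} = [a_i,a_j], and such that G/G₃ has order 32 with G'/G₃ ≅ (ℤ/2)². Then G₃ = G₄, and hence by nilpotency G₃ is trivial, so |G| = 32. -/
/-!
Work in `Q = G/G₄`, where `G₃/G₄` is central, and of exponent 2 because `G'` has exponent 2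
modulo `G₃`. There `⁅x², y⁆ = ⁅⁅x, y⁆, x⁆ ⁅x, y⁆²`, so the relations `a₃² ≡ c₁₂`,
`a₂² ≡ c₁₂c₁₃`, `a₁² ≡ 1` (mod the centre) express each `⁅c₁₂, y⁆`, `⁅c₁₂, y⁆⁅c₁₃, y⁆` and
`⁅a₁, y⁆²` through commutators of the generators; evaluating at `y = a₁, a₂, a₃` kills all
the `c₁ⱼₖ`. Hence the commutators of the generators are central in `Q`, so `Q` has class 2,
i.e. `G₃ = G₄`, and a nilpotent group whose lower central series stalls is trivial from there on.
In Mathlib's indexing, `G_{n+1}` is `(⊤ : Subgroup G).lowerCentralSeries n`.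
-/

open scoped commutatorElement

section CommutatorIdentities

open Subgroup

variable {G : Type*} [Group G]

theorem commutatorElement_sq_left (x y : G) : ⁅x ^ 2, y⁆ = ⁅x, ⁅x, y⁆⁆ * ⁅x, y⁆ ^ 2 := by
  simp only [pow_two]; group

theorem commutatorElement_eq_one_of_mem_center {z : G} (hz : z ∈ center G) (y : G) : ⁅z, y⁆ = 1 :=
  commutatorElement_eq_one_iff_mul_comm.mpr (mem_center_iff.mp hz y).symm

theorem commutatorElement_left_eq_of_mul_inv_mem_center {u v : G} (h : u * v⁻¹ ∈ center G)
    (y : G) : ⁅u, y⁆ = ⁅v, y⁆ := by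
  obtain ⟨z, hz, rfl⟩ : ∃ z ∈ center G, u = z * v := ⟨u * v⁻¹, h, by group⟩
  calc ⁅z * v, y⁆ = z * ⁅v, y⁆ * z⁻¹ * ⁅z, y⁆ := by group
    _ = ⁅v, y⁆ := by
      rw [commutatorElement_eq_one_of_mem_center hz, mul_one, ← mem_center_iff.mp hz,
        mul_inv_cancel_right]

theorem commutatorElement_mul_left_of_mem_center {c d y : G} (h : ⁅d, y⁆ ∈ center G) :
    ⁅c * d, y⁆ = ⁅c, y⁆ * ⁅d, y⁆ := by
  calc ⁅c * d, y⁆ = c * ⁅d, y⁆ * c⁻¹ * ⁅c, y⁆ := by group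
    _ = ⁅c, y⁆ * ⁅d, y⁆ := by
      rw [mem_center_iff.mp h c, mul_inv_cancel_right, mem_center_iff.mp h ⁅c, y⁆]

theorem commutatorElement_inv_left_of_mem_center {c y : G} (h : ⁅c, y⁆ ∈ center G) :
    ⁅c⁻¹, y⁆ = ⁅c, y⁆⁻¹ := by
  calc ⁅c⁻¹, y⁆ = c⁻¹ * ⁅c, y⁆⁻¹ * c := by group
    _ = ⁅c, y⁆⁻¹ := by rw [mem_center_iff.mp (inv_mem h) c⁻¹, inv_mul_cancel_right]

end CommutatorIdentities

namespace Subgroup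

variable {G : Type*} [Group G]

theorem sq_mem_lowerCentralSeries_add_two {n : ℕ}
    (h : ∀ x ∈ (⊤ : Subgroup G).lowerCentralSeries n,
      x ^ 2 ∈ (⊤ : Subgroup G).lowerCentralSeries (n + 1))
    {z : G} (hz : z ∈ (⊤ : Subgroup G).lowerCentralSeries (n + 1)) :
    z ^ 2 ∈ (⊤ : Subgroup G).lowerCentralSeries (n + 2) := by
  have comm_mem {c : G} (hc : c ∈ (⊤ : Subgroup G).lowerCentralSeries (n + 1)) (g : G) :
      ⁅c, g⁆ ∈ (⊤ : Subgroup G).lowerCentralSeries (n + 2) :=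
    commutator_mem_commutator hc (mem_top g)
  rw [lowerCentralSeries_succ, commutator_def] at hz
  induction hz using closure_induction with
  | mem _ hx =>
    obtain ⟨c, hc, g, -, rfl⟩ := hx
    -- squaring is linear in the first slot of a commutator modulo the next term
    have key : ⁅c, g⁆ ^ 2 = ⁅⁅c, g⁆, c⁆ * ⁅c ^ 2, g⁆ := by simp only [pow_two]; group
    rw [key]
    exact mul_mem (comm_mem (commutator_mem_commutator hc (mem_top g)) c) (comm_mem (h c hc) g)
  | one => rw [one_pow]; exact one_mem _
  | mul x y hx _ hx2 hy2 =>
    have key : (x * y) ^ 2 = x ^ 2 * ⁅x⁻¹, y⁆ * y ^ 2 := by simp only [pow_two]; group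
    rw [key]
    exact mul_mem (mul_mem hx2 (comm_mem (inv_mem hx) y)) hy2
  | inv x _ hx2 => simpa only [inv_pow] using inv_mem hx2

theorem lowerCentralSeries_le_center_of_succ_eq_bot {n : ℕ}
    (h : (⊤ : Subgroup G).lowerCentralSeries (n + 1) = ⊥) :
    (⊤ : Subgroup G).lowerCentralSeries n ≤ center G := fun z hz => by
  rw [mem_center_iff]
  intro g
  have hzg : ⁅z, g⁆ ∈ (⊤ : Subgroup G).lowerCentralSeries (n + 1) :=
    commutator_mem_commutator hz (mem_top g)
  rw [h, mem_bot, commutatorElement_eq_one_iff_mul_comm] at hzg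
  exact hzg.symm

theorem lowerCentralSeries_eq_bot_of_eq_succ [Group.IsNilpotent G] {n : ℕ}
    (h : (⊤ : Subgroup G).lowerCentralSeries n = (⊤ : Subgroup G).lowerCentralSeries (n + 1)) :
    (⊤ : Subgroup G).lowerCentralSeries n = ⊥ := by
  have stable (m : ℕ) :
      (⊤ : Subgroup G).lowerCentralSeries (n + m) = (⊤ : Subgroup G).lowerCentralSeries n := by
    induction m with
    | zero => rfl
    | succ m ih => rw [← add_assoc, lowerCentralSeries_succ, ih, ← lowerCentralSeries_succ, h]
  obtain ⟨k, hk⟩ := nilpotent_iff_lowerCentralSeries.mp ‹_›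
  rw [eq_bot_iff, ← hk, ← stable k]
  exact lowerCentralSeries_antitone ⊤ (Nat.le_add_left k n)

theorem map_top_lowerCentralSeries_of_surjective {K : Type*} [Group K] {f : G →* K}
    (hf : Function.Surjective f) (n : ℕ) :
    ((⊤ : Subgroup G).lowerCentralSeries n).map f = (⊤ : Subgroup K).lowerCentralSeries n := by
  rw [map_lowerCentralSeries, map_top_of_surjective f hf]

theorem lowerCentralSeries_quotient_eq_bot_iff {N : Subgroup G} [N.Normal] {n : ℕ} :
    (⊤ : Subgroup (G ⧸ N)).lowerCentralSeries n = ⊥ ↔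
      (⊤ : Subgroup G).lowerCentralSeries n ≤ N := by
  rw [← map_top_lowerCentralSeries_of_surjective (QuotientGroup.mk'_surjective N),
    Subgroup.map_eq_bot_iff, QuotientGroup.ker_mk']

theorem commutator_le_center_of_closure_eq_top {S : Set G}
    (hS : closure S = ⊤) (h : ∀ s ∈ S, ∀ t ∈ S, ⁅s, t⁆ ∈ centralizer S) :
    _root_.commutator G ≤ center G := by
  have centralizer_eq : centralizer S = center G := by
    rw [← centralizer_closure, hS, coe_top, centralizer_univ]
  let φ := QuotientGroup.mk' (center G)
  have hT : closure (φ '' S) = ⊤ := by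
    rw [← MonoidHom.map_closure, hS, map_top_of_surjective _ (QuotientGroup.mk'_surjective _)]
  -- the images of the generators commute in `G ⧸ center G`, so that quotient is abelian
  have hTcomm : φ '' S ⊆ centralizer (φ '' S) := by
    rintro _ ⟨s, hs, rfl⟩
    rw [SetLike.mem_coe, mem_centralizer_iff_commutator_eq_one]
    rintro _ ⟨t, ht, rfl⟩
    rw [← map_commutatorElement, QuotientGroup.mk'_apply, QuotientGroup.eq_one_iff,
      ← centralizer_eq, ← commutatorElement_inv]
    exact inv_mem (h s hs t ht)
  rw [_root_.commutator_def, commutator_le]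
  intro x _ y _
  have hx : φ x ∈ center (G ⧸ center G) := by
    have hZ := centralizer_closure (φ '' S)
    rw [hT, coe_top, centralizer_univ] at hZ
    rw [hZ]
    exact (closure_le _).mpr hTcomm (hT ▸ mem_top (φ x))
  rw [← QuotientGroup.eq_one_iff, ← QuotientGroup.mk'_apply, map_commutatorElement,
    commutatorElement_eq_one_iff_mul_comm]
  exact (mem_center_iff.mp hx (φ y)).symm

end Subgroup

namespace HallSenior32041

open Subgroup

variable {G : Type*} [Group G]

theorem commutator_mem_centralizer {Z : Subgroup G} (hZ : Z ≤ center G)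
    (hZ2 : ∀ z ∈ Z, z ^ 2 = 1) (hZ3 : ∀ x y z : G, ⁅⁅x, y⁆, z⁆ ∈ Z) {a₁ a₂ a₃ : G}
    (h1 : a₁ ^ 2 ∈ Z) (h2 : a₂ ^ 2 * (⁅a₁, a₂⁆ * ⁅a₁, a₃⁆)⁻¹ ∈ Z)
    (h3 : a₃ ^ 2 * ⁅a₁, a₂⁆⁻¹ ∈ Z) (h23 : ⁅a₂, a₃⁆ ∈ Z) :
    ⁅a₁, a₂⁆ ∈ centralizer {a₁, a₂, a₃} ∧ ⁅a₁, a₃⁆ ∈ centralizer {a₁, a₂, a₃} := by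
  have cent (x y z : G) : ⁅⁅x, y⁆, z⁆ ∈ center G := hZ (hZ3 x y z)
  have inv_self (x y z : G) : ⁅⁅x, y⁆, z⁆⁻¹ = ⁅⁅x, y⁆, z⁆ :=
    inv_eq_of_mul_eq_one_right (by rw [← pow_two]; exact hZ2 _ (hZ3 x y z))
  have swap (x y z : G) : ⁅⁅y, x⁆, z⁆ = ⁅⁅x, y⁆, z⁆ := by
    rw [← commutatorElement_inv x y, commutatorElement_inv_left_of_mem_center (cent x y z),
      inv_self]
  have sq_swap (x y : G) : ⁅y, x⁆ ^ 2 = (⁅x, y⁆ ^ 2)⁻¹ := by rw [← commutatorElement_inv, inv_pow]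
  have sq_left (x y : G) : ⁅x ^ 2, y⁆ = ⁅⁅x, y⁆, x⁆ * ⁅x, y⁆ ^ 2 := by
    rw [commutatorElement_sq_left, ← commutatorElement_inv, inv_self]
  have rel_a₁ (y : G) : ⁅a₁, y⁆ ^ 2 = ⁅⁅a₁, y⁆, a₁⁆ := by
    have h := sq_left a₁ y
    rw [commutatorElement_eq_one_of_mem_center (hZ h1), eq_comm, ← eq_inv_iff_mul_eq_one] at h
    rw [← inv_self, h, inv_inv]
  have rel_a₂ (y : G) : ⁅⁅a₁, a₂⁆, y⁆ * ⁅⁅a₁, a₃⁆, y⁆ = ⁅⁅a₂, y⁆, a₂⁆ * ⁅a₂, y⁆ ^ 2 := by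
    rw [← sq_left, commutatorElement_left_eq_of_mul_inv_mem_center (hZ h2),
      commutatorElement_mul_left_of_mem_center (cent _ _ _)]
  have rel_a₃ (y : G) : ⁅⁅a₁, a₂⁆, y⁆ = ⁅⁅a₃, y⁆, a₃⁆ * ⁅a₃, y⁆ ^ 2 := by
    rw [← sq_left, commutatorElement_left_eq_of_mul_inv_mem_center (hZ h3)]
  have c₂₃_comm (y : G) : ⁅⁅a₂, a₃⁆, y⁆ = 1 := commutatorElement_eq_one_of_mem_center (hZ h23) y
  have c₁₂₃ : ⁅⁅a₁, a₂⁆, a₃⁆ = 1 := by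
    rw [rel_a₃, commutatorElement_self, commutatorElement_one_left, one_pow, one_mul]
  have c₁₂₂ : ⁅⁅a₁, a₂⁆, a₂⁆ = 1 := by
    rw [rel_a₃, swap, c₂₃_comm, sq_swap, hZ2 _ h23, inv_one, one_mul]
  have c₁₃₂ : ⁅⁅a₁, a₃⁆, a₂⁆ = 1 := by
    simpa only [c₁₂₂, one_mul, commutatorElement_self, commutatorElement_one_left, one_pow,
      mul_one] using rel_a₂ a₂
  have c₁₃₃ : ⁅⁅a₁, a₃⁆, a₃⁆ = 1 := by
    simpa only [c₁₂₃, one_mul, c₂₃_comm, hZ2 _ h23] using rel_a₂ a₃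
  have c₁₃₁ : ⁅⁅a₁, a₃⁆, a₁⁆ = 1 := by
    have h := rel_a₂ a₁
    simp only [swap a₁ a₂] at h
    rw [c₁₂₂, one_mul, sq_swap, rel_a₁, inv_self, mul_eq_left] at h
    exact h
  have c₁₂₁ : ⁅⁅a₁, a₂⁆, a₁⁆ = 1 := by
    rw [rel_a₃, swap, c₁₃₃, one_mul, sq_swap, rel_a₁, c₁₃₁, inv_one]
  simp only [mem_centralizer_iff_commutator_eq_one', Set.mem_insert_iff, Set.mem_singleton_iff,
    forall_eq_or_imp, forall_eq]
  exact ⟨⟨c₁₂₁, c₁₂₂, c₁₂₃⟩, c₁₃₁, c₁₃₂, c₁₃₃⟩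

theorem lowerCentralSeries_two_eq_bot (hG : (⊤ : Subgroup G).lowerCentralSeries 3 = ⊥)
    {a₁ a₂ a₃ : G} (hgen : closure {a₁, a₂, a₃} = ⊤)
    (h1 : a₁ ^ 2 ∈ (⊤ : Subgroup G).lowerCentralSeries 2)
    (h2 : a₂ ^ 2 * (⁅a₁, a₂⁆ * ⁅a₁, a₃⁆)⁻¹ ∈ (⊤ : Subgroup G).lowerCentralSeries 2)
    (h3 : a₃ ^ 2 * (⁅a₁, a₂⁆)⁻¹ ∈ (⊤ : Subgroup G).lowerCentralSeries 2)
    (h23 : ⁅a₂, a₃⁆ ∈ (⊤ : Subgroup G).lowerCentralSeries 2)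
    (hderexp : ∀ x ∈ commutator G, x ^ 2 ∈ (⊤ : Subgroup G).lowerCentralSeries 2) :
    (⊤ : Subgroup G).lowerCentralSeries 2 = ⊥ := by
  have hZ := lowerCentralSeries_le_center_of_succ_eq_bot hG
  have hZ2 (z : G) (hz : z ∈ (⊤ : Subgroup G).lowerCentralSeries 2) : z ^ 2 = 1 := by
    simpa only [hG, mem_bot] using sq_mem_lowerCentralSeries_add_two hderexp hz
  have hZ3 (x y z : G) : ⁅⁅x, y⁆, z⁆ ∈ (⊤ : Subgroup G).lowerCentralSeries 2 :=
    commutator_mem_commutator (commutator_mem_commutator (mem_top x) (mem_top y)) (mem_top z)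
  obtain ⟨h12, h13⟩ := commutator_mem_centralizer hZ hZ2 hZ3 h1 h2 h3 h23
  have h23' : ⁅a₂, a₃⁆ ∈ centralizer {a₁, a₂, a₃} := center_le_centralizer _ (hZ h23)
  refine Subgroup.lowerCentralSeries_succ_eq_bot ⊤ (commutator_le_center_of_closure_eq_top hgen ?_)
  rintro s hs t ht
  rcases hs with rfl | rfl | rfl <;> rcases ht with rfl | rfl | rfl <;>
    first
    | (rw [commutatorElement_self]; exact one_mem _)
    | assumption
    | (rw [← commutatorElement_inv]; exact inv_mem ‹_›)

theorem lowerCentralSeries_two_le_three {a₁ a₂ a₃ : G} (hgen : closure {a₁, a₂, a₃} = ⊤)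
    (h1 : a₁ ^ 2 ∈ (⊤ : Subgroup G).lowerCentralSeries 2)
    (h2 : a₂ ^ 2 * (⁅a₁, a₂⁆ * ⁅a₁, a₃⁆)⁻¹ ∈ (⊤ : Subgroup G).lowerCentralSeries 2)
    (h3 : a₃ ^ 2 * (⁅a₁, a₂⁆)⁻¹ ∈ (⊤ : Subgroup G).lowerCentralSeries 2)
    (h23 : ⁅a₂, a₃⁆ ∈ (⊤ : Subgroup G).lowerCentralSeries 2)
    (hderexp : ∀ x ∈ commutator G, x ^ 2 ∈ (⊤ : Subgroup G).lowerCentralSeries 2) :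
    (⊤ : Subgroup G).lowerCentralSeries 2 ≤ (⊤ : Subgroup G).lowerCentralSeries 3 := by
  set f := QuotientGroup.mk' ((⊤ : Subgroup G).lowerCentralSeries 3)
  have hf : Function.Surjective f := QuotientGroup.mk'_surjective _
  have map_mem {n : ℕ} {x : G} (hx : x ∈ (⊤ : Subgroup G).lowerCentralSeries n) :
      f x ∈ (⊤ : Subgroup (G ⧸ (⊤ : Subgroup G).lowerCentralSeries 3)).lowerCentralSeries n :=
    map_top_lowerCentralSeries_of_surjective hf n ▸ mem_map_of_mem f hx
  rw [← lowerCentralSeries_quotient_eq_bot_iff]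
  refine lowerCentralSeries_two_eq_bot (lowerCentralSeries_quotient_eq_bot_iff.mpr le_rfl)
    (a₁ := f a₁) (a₂ := f a₂) (a₃ := f a₃) ?_ (by simpa only [map_pow] using map_mem h1)
    (by simpa only [map_mul, map_pow, map_inv, map_commutatorElement] using map_mem h2)
    (by simpa only [map_mul, map_pow, map_inv, map_commutatorElement] using map_mem h3)
    (by simpa only [map_commutatorElement] using map_mem h23) ?_
  · rw [← Set.image_singleton, ← Set.image_insert_eq, ← Set.image_insert_eq,
      ← MonoidHom.map_closure, hgen, map_top_of_surjective f hf]
  · rintro _ hx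
    rw [← top_lowerCentralSeries_one, ← map_top_lowerCentralSeries_of_surjective hf] at hx
    obtain ⟨x, hx, rfl⟩ := hx
    rw [← map_pow]
    exact map_mem (hderexp x hx)

end HallSenior32041

theorem group_32_041_rigid_general {G : Type*} [Group G] [Finite G] (hp : IsPGroup 2 G)
    (a₁ a₂ a₃ : G) (hgen : Subgroup.closure {a₁, a₂, a₃} = (⊤ : Subgroup G))
    (h1 : a₁ ^ 2 ∈ (⊤ : Subgroup G).lowerCentralSeries 2)
    (h2 : a₂ ^ 2 * (⁅a₁, a₂⁆ * ⁅a₁, a₃⁆)⁻¹ ∈ (⊤ : Subgroup G).lowerCentralSeries 2)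
    (h3 : a₃ ^ 2 * (⁅a₁, a₂⁆)⁻¹ ∈ (⊤ : Subgroup G).lowerCentralSeries 2)
    (h23 : ⁅a₂, a₃⁆ ∈ (⊤ : Subgroup G).lowerCentralSeries 2)
    (hcard : Nat.card (G ⧸ (⊤ : Subgroup G).lowerCentralSeries 2) = 32)
    (hderexp : ∀ x ∈ commutator G, x ^ 2 ∈ (⊤ : Subgroup G).lowerCentralSeries 2) :
    (⊤ : Subgroup G).lowerCentralSeries 2 = (⊤ : Subgroup G).lowerCentralSeries 3 ∧
    (⊤ : Subgroup G).lowerCentralSeries 2 = ⊥ ∧ Nat.card G = 32 := by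
  have h34 : (⊤ : Subgroup G).lowerCentralSeries 2 = (⊤ : Subgroup G).lowerCentralSeries 3 :=
    le_antisymm (HallSenior32041.lowerCentralSeries_two_le_three hgen h1 h2 h3 h23 hderexp)
      (Subgroup.lowerCentralSeries_antitone ⊤ (by norm_num))
  have : Group.IsNilpotent G := hp.isNilpotent
  have hbot := Subgroup.lowerCentralSeries_eq_bot_of_eq_succ h34
  refine ⟨h34, hbot, ?_⟩
  rwa [hbot, ← Subgroup.index, Subgroup.index_bot] at hcard

/-- Let `G` be a finite 2-group generated by `a₁, a₂, a₃` with relations modulo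
`G₃ = [G,G']`: `a₁² ≡ 1`, `a₂² ≡ c₁₂c₁₃`, `a₃² ≡ c₁₂`, `c₂₃ ∈ G₃`, such that `G/G₃`
has order 32 and `G'/G₃ ≅ (ℤ/2)²` (Hall–Senior group 32.041). Then `G₃ = G₄`,
hence `G₃` is trivial and `|G| = 32`. -/
theorem group_32_041_rigid {G : Type*} [Group G] [Finite G] (hp : IsPGroup 2 G)
    (a₁ a₂ a₃ : G) (hgen : Subgroup.closure {a₁, a₂, a₃} = (⊤ : Subgroup G))
    (h1 : a₁ ^ 2 ∈ (⊤ : Subgroup G).lowerCentralSeries 2)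
    (h2 : a₂ ^ 2 * (⁅a₁, a₂⁆ * ⁅a₁, a₃⁆)⁻¹ ∈ (⊤ : Subgroup G).lowerCentralSeries 2)
    (h3 : a₃ ^ 2 * (⁅a₁, a₂⁆)⁻¹ ∈ (⊤ : Subgroup G).lowerCentralSeries 2)
    (h23 : ⁅a₂, a₃⁆ ∈ (⊤ : Subgroup G).lowerCentralSeries 2)
    (hcard : Nat.card (G ⧸ (⊤ : Subgroup G).lowerCentralSeries 2) = 32)
    (hder4 : Nat.card
      (Subgroup.map (QuotientGroup.mk' ((⊤ : Subgroup G).lowerCentralSeries 2)) (commutator G)) = 4)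
    (hderexp : ∀ x ∈ commutator G, x ^ 2 ∈ (⊤ : Subgroup G).lowerCentralSeries 2) :
    (⊤ : Subgroup G).lowerCentralSeries 2 = (⊤ : Subgroup G).lowerCentralSeries 3 ∧
    (⊤ : Subgroup G).lowerCentralSeries 2 = ⊥ ∧ Nat.card G = 32 :=
  group_32_041_rigid_general hp a₁ a₂ a₃ hgen h1 h2 h3 h23 hcard hderexp
end

section
/- Let G be a finite 2-group with [a₂,a₃] ∈ G₃ and exponent-2 lower central quotients (i.e. G_j/G_{j+1} elementary abelian 2-groups for all j). Then c₁₂₃ ≡ c₁₃₂ (mod G₄), where c_{ijk} = [[a_i,a_j],a_k]. -/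
/-!
Work in `G ⧸ G₄`. There `z = ⁅a₂, a₃⁆` is central, so `a₂ * a₃ = z * (a₃ * a₂)` gives
`⁅a₁, a₂ * a₃⁆ = ⁅a₁, a₃ * a₂⁆`. Expanding both sides leaves
`⁅a₁, a₂⁆ * c₁₃₂⁻¹ * ⁅a₁, a₃⁆ = ⁅a₁, a₃⁆ * c₁₂₃⁻¹ * ⁅a₁, a₂⁆`; the triple commutators are central
and `⁅a₁, a₂⁆, ⁅a₁, a₃⁆` commute because `G'' ⊆ G₄`, so `c₁₂₃ = c₁₃₂`.
-/

open scoped commutatorElement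

open Subgroup

section CommutatorCalculus

variable {Q : Type*} [Group Q]

theorem commutatorElement_mul_right_eq_mul_commutatorElement_mul (a b c : Q) :
    ⁅a, b * c⁆ = ⁅a, b⁆ * ⁅b, ⁅a, c⁆⁆ * ⁅a, c⁆ := by
  simp only [commutatorElement_def]
  group

theorem commutatorElement_mul_right_of_mem_center {z : Q} (hz : z ∈ center Q) (a b : Q) :
    ⁅a, z * b⁆ = ⁅a, b⁆ := by
  rw [commutatorElement_mul_right_eq_mul_commutatorElement_mul,
    Commute.commutator_eq (mem_center_iff.mp hz a),
    Commute.commutator_eq (mem_center_iff.mp hz _).symm, one_mul, one_mul]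

theorem commutatorElement_commutatorElement_right_comm {b₁ b₂ b₃ : Q}
    (h₂₃ : ⁅b₂, b₃⁆ ∈ center Q) (h₁₂₃ : ⁅⁅b₁, b₂⁆, b₃⁆ ∈ center Q)
    (h₁₃₂ : ⁅⁅b₁, b₃⁆, b₂⁆ ∈ center Q) (hcomm : Commute ⁅b₁, b₂⁆ ⁅b₁, b₃⁆) :
    ⁅⁅b₁, b₂⁆, b₃⁆ = ⁅⁅b₁, b₃⁆, b₂⁆ := by
  have hswap : ⁅b₁, b₂ * b₃⁆ = ⁅b₁, b₃ * b₂⁆ := by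
    rw [← commutatorElement_mul_right_of_mem_center h₂₃ b₁ (b₃ * b₂), commutatorElement_def b₂]
    group
  rw [commutatorElement_mul_right_eq_mul_commutatorElement_mul,
    commutatorElement_mul_right_eq_mul_commutatorElement_mul,
    ← commutatorElement_inv ⁅b₁, b₃⁆, ← commutatorElement_inv ⁅b₁, b₂⁆,
    mem_center_iff.mp (inv_mem h₁₃₂), mem_center_iff.mp (inv_mem h₁₂₃),
    mul_assoc, mul_assoc, hcomm.symm.eq] at hswap
  exact inv_injective (mul_right_cancel hswap).symm

end CommutatorCalculus

section LowerCentralSeries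

variable {G : Type*} [Group G]

theorem QuotientGroup.commute_mk_of_commutatorElement_mem {N : Subgroup G} [N.Normal] {x y : G}
    (h : ⁅x, y⁆ ∈ N) : Commute (x : G ⧸ N) y :=
  commutatorElement_eq_one_iff_commute.mp ((QuotientGroup.eq_one_iff _).mpr h)

theorem QuotientGroup.mk_mem_center_of_mem_lowerCentralSeries {n : ℕ} {x : G}
    (hx : x ∈ (⊤ : Subgroup G).lowerCentralSeries n) :
    (x : G ⧸ (⊤ : Subgroup G).lowerCentralSeries (n + 1)) ∈ center _ := by
  rw [mem_center_iff]
  rintro ⟨g⟩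
  exact (commute_mk_of_commutatorElement_mem (commutator_mem_commutator hx (mem_top g))).symm

end LowerCentralSeries

theorem c123_eq_c132_mod_G4_general {G : Type*} [Group G]
    (a₁ a₂ a₃ : G)
    (h23 : ⁅a₂, a₃⁆ ∈ (⊤ : Subgroup G).lowerCentralSeries 2)
    (hG'' : ⁅commutator G, commutator G⁆ ≤ (⊤ : Subgroup G).lowerCentralSeries 3) :
    ⁅⁅a₁, a₂⁆, a₃⁆ * (⁅⁅a₁, a₃⁆, a₂⁆)⁻¹ ∈ (⊤ : Subgroup G).lowerCentralSeries 3 := by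
  have mem_G₂ : ∀ x y : G, ⁅x, y⁆ ∈ (⊤ : Subgroup G).lowerCentralSeries 1 :=
    fun x y => commutator_mem_commutator (mem_top x) (mem_top y)
  have mem_G₃ : ∀ x y z : G, ⁅⁅x, y⁆, z⁆ ∈ (⊤ : Subgroup G).lowerCentralSeries 2 :=
    fun x y z => commutator_mem_commutator (mem_G₂ x y) (mem_top z)
  have key := commutatorElement_commutatorElement_right_comm
      (Q := G ⧸ (⊤ : Subgroup G).lowerCentralSeries 3) (b₁ := a₁) (b₂ := a₂) (b₃ := a₃)
      (QuotientGroup.mk_mem_center_of_mem_lowerCentralSeries h23)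
      (QuotientGroup.mk_mem_center_of_mem_lowerCentralSeries (mem_G₃ a₁ a₂ a₃))
      (QuotientGroup.mk_mem_center_of_mem_lowerCentralSeries (mem_G₃ a₁ a₃ a₂))
      (QuotientGroup.commute_mk_of_commutatorElement_mem
        (hG'' (commutator_mem_commutator (mem_G₂ a₁ a₂) (mem_G₂ a₁ a₃))))
  exact (QuotientGroup.eq_one_iff _).mp (mul_inv_eq_one.mpr key)

/-- Let `G` be a finite 2-group generated by `a₁, a₂, a₃` with `[a₂,a₃] ∈ G₃`,
elementary abelian lower central quotients (`x² ∈ G_{j+1}` for `x ∈ G_j`), and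
`G'' ⊆ G₄`. Then `c₁₂₃ ≡ c₁₃₂ (mod G₄)`. -/
theorem c123_eq_c132_mod_G4 {G : Type*} [Group G] [Finite G] (hp : IsPGroup 2 G)
    (a₁ a₂ a₃ : G) (hgen : Subgroup.closure {a₁, a₂, a₃} = (⊤ : Subgroup G))
    (h23 : ⁅a₂, a₃⁆ ∈ (⊤ : Subgroup G).lowerCentralSeries 2)
    (hexp : ∀ j : ℕ, ∀ x ∈ (⊤ : Subgroup G).lowerCentralSeries j, x ^ 2 ∈ (⊤ : Subgroup G).lowerCentralSeries (j + 1))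
    (hG'' : ⁅commutator G, commutator G⁆ ≤ (⊤ : Subgroup G).lowerCentralSeries 3) :
    ⁅⁅a₁, a₂⁆, a₃⁆ * (⁅⁅a₁, a₃⁆, a₂⁆)⁻¹ ∈ (⊤ : Subgroup G).lowerCentralSeries 3 :=
  c123_eq_c132_mod_G4_general a₁ a₂ a₃ h23 hG''
end

section
/- Let U, G, H be subgroups of an abelian group A with H ≤ G and both of finite index situations as needed. Then (UG : UH) · (G ∩ U : H ∩ U) = (G : H), i.e. (UG : UH) = (G : H) / (U ∩ G : U ∩ H) whenever the indices are finite. -/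
/-! Modulo the normal subgroup `U ⊔ H`, the group `U ⊔ G` is `G`, so `(U ⊔ G : U ⊔ H)` is the
index of `(U ⊔ H) ⊓ G = (U ⊓ G) ⊔ H` in `G` (Dedekind's modular law). Modulo `H`, the second
isomorphism theorem identifies `(U ⊓ G) ⊔ H` over `H` with `U ⊓ G` over `U ⊓ H`, and the formula is
the tower law `H ≤ (U ⊔ H) ⊓ G ≤ G`. -/

namespace Subgroup

variable {A : Type*} [Group A] {U G H : Subgroup A}

theorem sup_inf_assoc_of_le_of_normal [H.Normal] (hHG : H ≤ G) :
    (H ⊔ U) ⊓ G = H ⊔ (U ⊓ G) :=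
  SetLike.coe_injective <| by
    rw [coe_inf, normal_mul, normal_mul, mul_inf_assoc H U G hHG]

theorem relIndex_sup_sup_of_le [(U ⊔ H).Normal] (hHG : H ≤ G) :
    (U ⊔ H).relIndex (U ⊔ G) = (U ⊔ H).relIndex G := by
  have hUG : U ⊔ G = G ⊔ (U ⊔ H) := by
    rw [sup_comm U G, ← sup_assoc, sup_of_le_left (hHG.trans le_sup_left)]
  rw [hUG, relIndex_sup_right]

theorem relIndex_inf_inf_of_le [H.Normal] (hHG : H ≤ G) :
    (H ⊓ U).relIndex (G ⊓ U) = H.relIndex ((U ⊔ H) ⊓ G) := by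
  have modular : (U ⊔ H) ⊓ G = (G ⊓ U) ⊔ H := by
    rw [sup_comm U H, sup_inf_assoc_of_le_of_normal hHG, sup_comm, inf_comm]
  have hGU : H ⊓ (G ⊓ U) = H ⊓ U := by rw [← inf_assoc, inf_of_le_left hHG]
  rw [modular, relIndex_sup_right, ← inf_relIndex_right H, hGU]

end Subgroup

theorem index_product_formula_general {A : Type*} [CommGroup A] (U G H : Subgroup A)
    (hHG : H ≤ G) :
    (U ⊔ H).relIndex (U ⊔ G) * (H ⊓ U).relIndex (G ⊓ U) = H.relIndex G := by
  rw [Subgroup.relIndex_sup_sup_of_le hHG, Subgroup.relIndex_inf_inf_of_le hHG,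
    ← Subgroup.inf_relIndex_right (U ⊔ H) G, mul_comm]
  exact Subgroup.relIndex_mul_relIndex _ _ _ (le_inf le_sup_right hHG) inf_le_right

/-- For subgroups `U, G, H` of an abelian group `A` with `H ≤ G` and `H` of finite
index in `G`, one has `(UG : UH) · (G ∩ U : H ∩ U) = (G : H)`. -/
theorem index_product_formula {A : Type*} [CommGroup A] (U G H : Subgroup A)
    (hHG : H ≤ G) (hfin : H.relIndex G ≠ 0) :
    (U ⊔ H).relIndex (U ⊔ G) * (H ⊓ U).relIndex (G ⊓ U) = H.relIndex G :=
  index_product_formula_general U G H hHG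
end

section
/- Let G be a finite 2-group with G/G' ≅ (ℤ/2)³ such that G/G₃ is the group 32.036 presented by generators a₁,a₂,a₃ with a₁² ≡ a₂² ≡ 1, a₃² ≡ c₁₃, c₂₃ ≡ 1 (mod G₃). Let B = ⟨a₃, a₁a₂, G'⟩. Then the Frattini subgroup of B equals G', and hence B has rank 2. -/
open Subgroup

open scoped commutatorElement Pointwise

/-! Put `N = B²B'`; it is normal in `G` and lies in `G'`. Modulo `N G₃`, the squares `a₃²` and
`(a₁a₂)²` together with the relations of 32.036 kill `c₁₂`, `c₁₃` and `c₂₃`, so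
`G' ≤ N G₃ = N [G', G]`, and nilpotency of `G` forces `G' ≤ N`. As `B²B'` lies in every maximal
subgroup of the 2-group `B`, the decomposition `B = ⟨a₃, a₁a₂⟩ G'` shows that `a₃, a₁a₂`
generate `B`. If `B` were cyclic, `G` would be generated by `a₁` and one further element, so
`G/G'`, of exponent 2, would have at most 4 elements. -/

section

variable {G : Type*} [Group G]

theorem Subgroup.Normal.closure_image_pow {H : Subgroup G} (hH : H.Normal) (n : ℕ) :
    (closure ((· ^ n) '' (H : Set G))).Normal where
  conj_mem x hx g := by
    have hconj : (closure ((· ^ n) '' (H : Set G))).map (MulAut.conj g).toMonoidHom ≤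
        closure ((· ^ n) '' (H : Set G)) := by
      rw [MonoidHom.map_closure, closure_le, Set.image_image]
      rintro _ ⟨h, hh, rfl⟩
      exact subset_closure ⟨g * h * g⁻¹, hH.conj_mem h hh g, by simp [conj_pow]⟩
    exact hconj (mem_map_of_mem _ hx)

theorem commutatorElement_mem_of_sq_mem {M : Subgroup G} [M.Normal] {a b : G}
    (ha : a ^ 2 ∈ M) (hb : b ^ 2 ∈ M) (hab : (a * b) ^ 2 ∈ M) : ⁅a, b⁆ ∈ M := by
  have h : ⁅a, b⁆ = (a * b) ^ 2 * (b⁻¹ * (a ^ 2)⁻¹ * b⁻¹⁻¹) * (b ^ 2)⁻¹ := by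
    simp only [commutatorElement_def, sq]; group
  rw [h]
  exact mul_mem (mul_mem hab (Normal.conj_mem inferInstance _ (inv_mem ha) _)) (inv_mem hb)

theorem commutator_le_of_closure_eq_top {S : Set G} (hS : closure S = ⊤) {M : Subgroup G}
    [M.Normal] (h : ∀ s ∈ S, ∀ t ∈ S, ⁅s, t⁆ ∈ M) : commutator G ≤ M := by
  rw [← Normal.quotient_commutative_iff_commutator_le]
  set f := QuotientGroup.mk' M
  have hcomm : ∀ x ∈ f '' S, ∀ y ∈ f '' S, x * y = y * x := by
    rintro _ ⟨s, hs, rfl⟩ _ ⟨t, ht, rfl⟩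
    rw [← commutatorElement_eq_one_iff_mul_comm, ← map_commutatorElement,
      QuotientGroup.mk'_apply, QuotientGroup.eq_one_iff]
    exact h s hs t ht
  have htop : closure (f '' S) = ⊤ := by
    rw [← MonoidHom.map_closure, hS, ← MonoidHom.range_eq_map,
      MonoidHom.range_eq_top.mpr (QuotientGroup.mk'_surjective M)]
  have := isMulCommutative_closure hcomm
  refine ⟨⟨fun x y => ?_⟩⟩
  have hx : x ∈ closure (f '' S) := htop ▸ mem_top x
  have hy : y ∈ closure (f '' S) := htop ▸ mem_top y
  exact congrArg Subtype.val (this.is_comm.comm (⟨x, hx⟩ : closure (f '' S)) ⟨y, hy⟩)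

theorem commutator_le_of_closure_triple_eq_top {a b c : G} (hgen : closure {a, b, c} = ⊤)
    {M : Subgroup G} [M.Normal] (hab : ⁅a, b⁆ ∈ M) (hac : ⁅a, c⁆ ∈ M) (hbc : ⁅b, c⁆ ∈ M) :
    commutator G ≤ M := by
  have hswap {x y : G} (h : ⁅x, y⁆ ∈ M) : ⁅y, x⁆ ∈ M := by
    rw [← commutatorElement_inv]; exact inv_mem h
  refine commutator_le_of_closure_eq_top hgen ?_
  simp only [Set.mem_insert_iff, Set.mem_singleton_iff]
  rintro s (rfl | rfl | rfl) t (rfl | rfl | rfl) <;>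
    first
    | (rw [commutatorElement_self]; exact one_mem M)
    | assumption
    | exact hswap ‹_›

theorem le_of_le_sup_commutator_top [Group.IsNilpotent G] {H N : Subgroup G} [N.Normal]
    (h : H ≤ N ⊔ ⁅H, ⊤⁆) : H ≤ N := by
  have key (n : ℕ) : H ≤ N ⊔ (⊤ : Subgroup G).lowerCentralSeries n := by
    induction n with
    | zero => simp
    | succ n ih =>
      refine h.trans (sup_le le_sup_left ?_)
      rw [commutator_le]
      intro x hx y _
      have hstep : N ⊔ (⊤ : Subgroup G).lowerCentralSeries n ≤
          (N ⊔ (⊤ : Subgroup G).lowerCentralSeries (n + 1)).upperCentralSeriesStep := by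
        refine sup_le (fun z hz w => mem_sup_left ?_) (fun z hz w => mem_sup_right ?_)
        · exact commutator_le_left N ⊤ (commutator_mem_commutator hz (mem_top w))
        · exact commutator_mem_commutator hz (mem_top w)
      exact hstep (ih hx) y
  obtain ⟨n, hn⟩ := Subgroup.nilpotent_iff_lowerCentralSeries.mp ‹Group.IsNilpotent G›
  simpa [hn] using key n

end

section

variable {P : Type*} [Group P] [Finite P] {p : ℕ} [Fact p.Prime]

theorem IsPGroup.index_eq_of_isCoatom (hP : IsPGroup p P) {M : Subgroup P} [M.Normal]
    (hM : IsCoatom M) : M.index = p := by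
  have hdvd : p ∣ Nat.card (P ⧸ M) := by
    refine ((hP.to_quotient M).card_eq_or_dvd).resolve_left fun h1 => hM.1 ?_
    rw [← index_eq_one]; exact h1
  obtain ⟨g, hg⟩ := exists_prime_orderOf_dvd_card' p hdvd
  obtain ⟨x, rfl⟩ := QuotientGroup.mk'_surjective M g
  have hx : x ∉ M := fun hx => by
    rw [QuotientGroup.mk'_apply, (QuotientGroup.eq_one_iff x).mpr hx, orderOf_one] at hg
    exact (Fact.out : p.Prime).one_lt.ne hg
  have hcomap : (zpowers (QuotientGroup.mk' M x)).comap (QuotientGroup.mk' M) = ⊤ := by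
    refine hM.2 _ (SetLike.lt_iff_le_and_exists.mpr ⟨fun m hm => ?_, x, ?_, hx⟩)
    · simp [mem_comap, (QuotientGroup.eq_one_iff m).mpr hm]
    · exact mem_comap.mpr (mem_zpowers _)
  have htop : zpowers (QuotientGroup.mk' M x) = ⊤ := by
    rw [← map_comap_eq_self_of_surjective (QuotientGroup.mk'_surjective M) (zpowers _), hcomap,
      ← MonoidHom.range_eq_map, MonoidHom.range_eq_top.mpr (QuotientGroup.mk'_surjective M)]
  rw [Subgroup.index, ← hg, ← Nat.card_zpowers, htop, card_top]

theorem IsPGroup.closure_range_pow_sup_commutator_le_frattini (hP : IsPGroup p P) :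
    closure (Set.range (· ^ p : P → P)) ⊔ commutator P ≤ frattini P := by
  refine le_iInf₂ fun M hM => ?_
  have : Group.IsNilpotent P := hP.isNilpotent
  have : M.Normal :=
    NormalizerCondition.normal_of_coatom M Group.normalizerCondition_of_isNilpotent hM
  have hidx := hP.index_eq_of_isCoatom hM
  refine sup_le ((closure_le M).mpr ?_) ?_
  · rintro _ ⟨g, rfl⟩
    simpa [hidx] using M.pow_index_mem g
  · have : IsCyclic (P ⧸ M) := isCyclic_of_prime_card hidx
    exact Normal.quotient_commutative_iff_commutator_le.mp inferInstance

end

theorem IsPGroup.eq_of_sup_closure_image_pow_sup_commutator_eq {G : Type*} [Group G] {p : ℕ}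
    [Fact p.Prime] {H K : Subgroup G} [Finite H] (hH : IsPGroup p H) (hKH : K ≤ H)
    (h : K ⊔ (Subgroup.closure ((· ^ p) '' (H : Set G)) ⊔ ⁅H, H⁆) = H) : K = H := by
  have hmap : (closure (Set.range (· ^ p : H → H)) ⊔ commutator H).map H.subtype =
      Subgroup.closure ((· ^ p) '' (H : Set G)) ⊔ ⁅H, H⁆ := by
    rw [Subgroup.map_sup, map_subtype_commutator, MonoidHom.map_closure, ← Set.range_comp]
    congr 2
    ext g
    simp
  have hK : K.subgroupOf H ⊔ frattini H = ⊤ := by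
    refine top_le_iff.mp (le_trans ?_ (sup_le_sup_left
      hH.closure_range_pow_sup_commutator_le_frattini _))
    rw [← map_subtype_le_map_subtype, Subgroup.map_sup, hmap, subgroupOf_map_subtype,
      inf_eq_left.mpr hKH, ← MonoidHom.range_eq_map, range_subtype, h]
  have := congrArg (Subgroup.map H.subtype) (frattini_nongenerating hK)
  rwa [subgroupOf_map_subtype, inf_eq_left.mpr hKH, ← MonoidHom.range_eq_map,
    range_subtype] at this

theorem card_le_orderOf_mul_orderOf_of_closure_pair_eq_top {A : Type*} [CommGroup A] {u v : A}
    (hgen : closure {u, v} = ⊤) : Nat.card A ≤ orderOf u * orderOf v := by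
  rw [Set.insert_eq, Subgroup.closure_union, ← zpowers_eq_closure, ← zpowers_eq_closure] at hgen
  calc Nat.card A = Nat.card ((zpowers u ⊔ zpowers v : Subgroup A) : Set A) := by
        rw [hgen, coe_top, Nat.card_univ]
    _ = Nat.card ((zpowers u : Set A) * (zpowers v : Set A)) := by rw [mul_normal]
    _ ≤ Nat.card (zpowers u) * Nat.card (zpowers v) := Set.natCard_mul_le
    _ = orderOf u * orderOf v := by rw [Nat.card_zpowers, Nat.card_zpowers]

theorem card_abelianization_le_of_closure_pair_eq_top {G : Type*} [Group G] {a b : G}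
    (hgen : closure {a, b} = ⊤) {n : ℕ} (hn : 0 < n) (hexp : ∀ g : G, g ^ n ∈ commutator G) :
    Nat.card (Abelianization G) ≤ n * n := by
  have hsurj : Function.Surjective (Abelianization.of : G →* Abelianization G) :=
    QuotientGroup.mk'_surjective _
  have horder (g : G) : orderOf (Abelianization.of g) ≤ n := by
    refine orderOf_le_of_pow_eq_one hn ?_
    rw [← map_pow, ← MonoidHom.mem_ker, Abelianization.ker_of]
    exact hexp g
  have hgen' : closure {Abelianization.of a, Abelianization.of b} = ⊤ := by
    rw [← Set.image_pair, ← MonoidHom.map_closure, hgen, ← MonoidHom.range_eq_map,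
      MonoidHom.range_eq_top.mpr hsurj]
  exact (card_le_orderOf_mul_orderOf_of_closure_pair_eq_top hgen').trans
    (Nat.mul_le_mul (horder a) (horder b))

theorem frattini_of_B_eq_derived_general {G : Type*} [Group G] [Finite G] (hp : IsPGroup 2 G)
    (a₁ a₂ a₃ : G) (hgen : Subgroup.closure {a₁, a₂, a₃} = (⊤ : Subgroup G))
    (hab8 : Nat.card (G ⧸ commutator G) = 8)
    (habexp : ∀ x : G, x ^ 2 ∈ commutator G)
    (h1 : a₁ ^ 2 ∈ (⊤ : Subgroup G).lowerCentralSeries 2)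
    (h2 : a₂ ^ 2 ∈ (⊤ : Subgroup G).lowerCentralSeries 2)
    (h3 : a₃ ^ 2 * (⁅a₁, a₃⁆)⁻¹ ∈ (⊤ : Subgroup G).lowerCentralSeries 2)
    (h23 : ⁅a₂, a₃⁆ ∈ (⊤ : Subgroup G).lowerCentralSeries 2)
    (B : Subgroup G) (hB : B = Subgroup.closure {a₃, a₁ * a₂} ⊔ commutator G) :
    (Subgroup.closure ((fun x => x ^ 2) '' (B : Set G)) ⊔ ⁅B, B⁆ = commutator G) ∧
    (∃ x y : G, Subgroup.closure {x, y} = B) ∧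
    ¬(∃ x : G, Subgroup.closure {x} = B) := by
  have : Group.IsNilpotent G := hp.isNilpotent
  have hK : Subgroup.closure {a₃, a₁ * a₂} ≤ B := hB ▸ le_sup_left
  have ha₃ : a₃ ∈ B := hK (subset_closure (by simp))
  have ha₁₂ : a₁ * a₂ ∈ B := hK (subset_closure (by simp))
  have hBn : B.Normal := Normal.of_commutator_le G (hB ▸ le_sup_right)
  set N := Subgroup.closure ((fun x => x ^ 2) '' (B : Set G)) ⊔ ⁅B, B⁆
  have : N.Normal := sup_normal (hH := hBn.closure_image_pow 2) (hK := commutator_normal B B)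
  have hsq {b : G} (hb : b ∈ B) : b ^ 2 ∈ N := mem_sup_left (subset_closure ⟨b, hb, rfl⟩)
  have hN : N = commutator G := by
    refine le_antisymm (sup_le ((closure_le _).mpr ?_) ?_) (le_of_le_sup_commutator_top ?_)
    · rintro _ ⟨b, -, rfl⟩
      exact habexp b
    · exact commutator_def G ▸ commutator_mono le_top le_top
    have hγ₃ : (⊤ : Subgroup G).lowerCentralSeries 2 ≤ N ⊔ ⁅commutator G, ⊤⁆ := le_sup_right
    refine commutator_le_of_closure_triple_eq_top hgen ?_ ?_ (hγ₃ h23)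
    · exact commutatorElement_mem_of_sq_mem (hγ₃ h1) (hγ₃ h2) (mem_sup_left (hsq ha₁₂))
    · exact inv_mem_iff.mp ((mul_mem_cancel_left (mem_sup_left (hsq ha₃))).mp (hγ₃ h3))
  refine ⟨hN, ⟨a₃, a₁ * a₂, ?_⟩, ?_⟩
  · exact (hp.to_subgroup B).eq_of_sup_closure_image_pow_sup_commutator_eq hK
      (by change _ ⊔ N = B; rw [hN, ← hB])
  · rintro ⟨x, hx⟩
    have hB' : B ≤ Subgroup.closure {a₁, x} := hx ▸ closure_mono (by simp)
    have hgen' : Subgroup.closure {a₁, x} = ⊤ := by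
      refine eq_top_iff.mpr (hgen ▸ (closure_le _).mpr ?_)
      simp only [Set.insert_subset_iff, Set.singleton_subset_iff, SetLike.mem_coe]
      refine ⟨subset_closure (by simp), ?_, hB' ha₃⟩
      rw [show a₂ = a₁⁻¹ * (a₁ * a₂) by group]
      exact mul_mem (inv_mem (subset_closure (by simp))) (hB' ha₁₂)
    have hle := card_abelianization_le_of_closure_pair_eq_top hgen' two_pos habexp
    have h8 : Nat.card (Abelianization G) = 8 := hab8
    omega

/-- Let `G` be a finite 2-group with `G/G' ≅ (ℤ/2)³` and `G/G₃` the Hall–Senior group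
32.036, presented by generators `a₁, a₂, a₃` with `a₁² ≡ a₂² ≡ 1`, `a₃² ≡ c₁₃`,
`c₂₃ ≡ 1 (mod G₃)`. Let `B = ⟨a₃, a₁a₂, G'⟩`. Then the Frattini subgroup `B²B'` of `B`
equals `G'`, and hence `B` has rank 2. -/
theorem frattini_of_B_eq_derived {G : Type*} [Group G] [Finite G] (hp : IsPGroup 2 G)
    (a₁ a₂ a₃ : G) (hgen : Subgroup.closure {a₁, a₂, a₃} = (⊤ : Subgroup G))
    (hab8 : Nat.card (G ⧸ commutator G) = 8)
    (habexp : ∀ x : G, x ^ 2 ∈ commutator G)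
    (h1 : a₁ ^ 2 ∈ (⊤ : Subgroup G).lowerCentralSeries 2)
    (h2 : a₂ ^ 2 ∈ (⊤ : Subgroup G).lowerCentralSeries 2)
    (h3 : a₃ ^ 2 * (⁅a₁, a₃⁆)⁻¹ ∈ (⊤ : Subgroup G).lowerCentralSeries 2)
    (h23 : ⁅a₂, a₃⁆ ∈ (⊤ : Subgroup G).lowerCentralSeries 2)
    (hcard : Nat.card (G ⧸ (⊤ : Subgroup G).lowerCentralSeries 2) = 32)
    (B : Subgroup G) (hB : B = Subgroup.closure {a₃, a₁ * a₂} ⊔ commutator G) :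
    (Subgroup.closure ((fun x => x ^ 2) '' (B : Set G)) ⊔ ⁅B, B⁆ = commutator G) ∧
    (∃ x y : G, Subgroup.closure {x, y} = B) ∧
    ¬(∃ x : G, Subgroup.closure {x} = B) :=
  frattini_of_B_eq_derived_general hp a₁ a₂ a₃ hgen hab8 habexp h1 h2 h3 h23 B hB
end

section
/- Let G be a finite 2-group such that G/G₃ ≅ 32.038 (generated by a₁,a₂,a₃ with a₁² ≡ a₃² ≡ c₂₃ ≡ 1, a₂² ≡ c₁₃ mod G₃), with G_j = ⟨c₁₂^{2^{j-2}}⟩ for j ≥ 3 (in particular G₃ = ⟨c₁₂²⟩). If a₁² = c₁₂^{2^k x} with k ≥ 1 and x odd, [a₁²,a₁] = 1 and [a₁²,a₂] = c₁₂²c₁₂₁, then a₁⁴ = 1. -/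
open scoped commutatorElement

/-- If `c` has 2-power order and `c ^ (2^a * u) = 1` with `u` odd, then `c ^ 2^a = 1`. -/
lemma pow_two_pow_eq_one_of_zpow_odd {G : Type*} [Group G] (c : G) (s a : ℕ) (u : ℤ)
    (hord : c ^ (2 : ℕ) ^ s = 1) (hu : Odd u) (h : c ^ ((2 : ℤ) ^ a * u) = 1) :
    c ^ (2 : ℕ) ^ a = 1 := by
  have h1 : orderOf c ∣ 2 ^ s := orderOf_dvd_of_pow_eq_one hord
  have h2 : (orderOf c : ℤ) ∣ (2 : ℤ) ^ a * u := orderOf_dvd_iff_zpow_eq_one.mpr h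
  have h3 : orderOf c ∣ ((2 : ℤ) ^ a * u).natAbs := by
    have := Int.natAbs_dvd_natAbs.mpr h2
    simpa using this
  have h4 : ((2 : ℤ) ^ a * u).natAbs = 2 ^ a * u.natAbs := by
    rw [Int.natAbs_mul, Int.natAbs_pow]
    rfl
  rw [h4] at h3
  have hodd : Odd u.natAbs := Int.natAbs_odd.mpr hu
  have hcop : Nat.Coprime (orderOf c) u.natAbs := by
    have h2s : Nat.Coprime (2 ^ s) u.natAbs := by
      apply Nat.Coprime.pow_left
      rw [Nat.Prime.coprime_iff_not_dvd Nat.prime_two]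
      intro hdvd
      exact (Nat.not_even_iff_odd.mpr hodd) (even_iff_two_dvd.mpr hdvd)
    exact Nat.Coprime.coprime_dvd_left h1 h2s
  exact orderOf_dvd_iff_pow_eq_one.mp (hcop.dvd_of_dvd_mul_right h3)

/-- Let `G` be a finite 2-group with `G/G₃ ≅ 32.038` (generators `a₁, a₂, a₃` with
`a₁² ≡ a₃² ≡ c₂₃ ≡ 1`, `a₂² ≡ c₁₃ (mod G₃)`), with `G_j = ⟨c₁₂^{2^{j-2}}⟩` for `j ≥ 3`.
If `a₁² = c₁₂^{2^k x}` with `k ≥ 1` and `x` odd, `[a₁², a₁] = 1`, and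
`[a₁², a₂] = c₁₂² c₁₂₁`, then `a₁⁴ = 1`. -/
theorem a1_fourth_power_eq_one {G : Type*} [Group G] [Finite G] (hp : IsPGroup 2 G)
    (a₁ a₂ a₃ : G) (hgen : Subgroup.closure {a₁, a₂, a₃} = (⊤ : Subgroup G))
    (h1 : a₁ ^ 2 ∈ (⊤ : Subgroup G).lowerCentralSeries 2)
    (h2 : a₂ ^ 2 * (⁅a₁, a₃⁆)⁻¹ ∈ (⊤ : Subgroup G).lowerCentralSeries 2)
    (h3 : a₃ ^ 2 ∈ (⊤ : Subgroup G).lowerCentralSeries 2)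
    (h23 : ⁅a₂, a₃⁆ ∈ (⊤ : Subgroup G).lowerCentralSeries 2)
    (hcard : Nat.card (G ⧸ (⊤ : Subgroup G).lowerCentralSeries 2) = 32)
    (hGj : ∀ j : ℕ, 3 ≤ j →
      (⊤ : Subgroup G).lowerCentralSeries (j - 1) = Subgroup.zpowers (⁅a₁, a₂⁆ ^ 2 ^ (j - 2)))
    (k x : ℕ) (hk : 1 ≤ k) (hx : Odd x)
    (ha : a₁ ^ 2 = ⁅a₁, a₂⁆ ^ (2 ^ k * x))
    (hc1 : ⁅a₁ ^ 2, a₁⁆ = 1)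
    (hc2 : ⁅a₁ ^ 2, a₂⁆ = ⁅a₁, a₂⁆ ^ 2 * ⁅⁅a₁, a₂⁆, a₁⁆) :
    a₁ ^ 4 = 1 := by
  set c := ⁅a₁, a₂⁆ with hc
  -- c has 2-power order
  obtain ⟨s, hs⟩ := hp c
  -- lower central series identifications
  have hG2 : (⊤ : Subgroup G).lowerCentralSeries 2 = Subgroup.zpowers (c ^ 2) := by
    have := hGj 3 (by norm_num)
    norm_num at this
    exact this
  have hG3 : (⊤ : Subgroup G).lowerCentralSeries 3 = Subgroup.zpowers (c ^ 4) := by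
    have := hGj 4 (by norm_num)
    norm_num at this
    exact this
  -- c ∈ LCS 1
  have hcmem1 : c ∈ (⊤ : Subgroup G).lowerCentralSeries 1 := by
    rw [Subgroup.lowerCentralSeries_succ]
    apply Subgroup.subset_closure
    exact ⟨a₁, by simp [Subgroup.lowerCentralSeries_zero], a₂, Subgroup.mem_top _,
      (commutatorElement_def a₁ a₂).symm⟩
  -- ⁅c, a₁⁆ ∈ LCS 2 = zpowers (c^2)
  have hcmem2 : ⁅c, a₁⁆ ∈ (⊤ : Subgroup G).lowerCentralSeries 2 := by
    rw [Subgroup.lowerCentralSeries_succ]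
    apply Subgroup.subset_closure
    exact ⟨c, hcmem1, a₁, Subgroup.mem_top _, (commutatorElement_def c a₁).symm⟩
  rw [hG2] at hcmem2
  obtain ⟨n, hn⟩ := Subgroup.mem_zpowers_iff.mp hcmem2
  -- ⁅a₁², a₂⁆ ∈ LCS 3 = zpowers (c^4)
  have hmem3 : ⁅a₁ ^ 2, a₂⁆ ∈ (⊤ : Subgroup G).lowerCentralSeries 3 := by
    rw [Subgroup.lowerCentralSeries_succ]
    apply Subgroup.subset_closure
    exact ⟨a₁ ^ 2, h1, a₂, Subgroup.mem_top _, (commutatorElement_def (a₁ ^ 2) a₂).symm⟩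
  rw [hG3] at hmem3
  obtain ⟨m, hm⟩ := Subgroup.mem_zpowers_iff.mp hmem3
  -- relation: c ^ (4m) = c ^ (2 + 2n), so c ^ (4m - 2 - 2n) = 1
  have hrel : c ^ ((4 : ℤ) * m - (2 + 2 * n)) = 1 := by
    have e1 : c ^ ((4 : ℤ) * m) = c ^ ((2 : ℤ) + 2 * n) := by
      have : (c ^ (4 : ℕ)) ^ m = c ^ (2 : ℕ) * (c ^ (2 : ℕ)) ^ n := by
        rw [hm, hc2, hn]
      rw [← zpow_natCast c 4, ← zpow_natCast c 2, ← zpow_mul, ← zpow_mul,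
        ← zpow_add] at this
      convert this using 2 <;> push_cast <;> ring
    rw [zpow_sub, e1, mul_inv_eq_one]
  -- conjugation action of a₁ on c
  have hconj : a₁ * c * a₁⁻¹ = c ^ ((1 : ℤ) - 2 * n) := by
    have hn' : c * a₁ * c⁻¹ * a₁⁻¹ = c ^ ((2 : ℤ) * n) := by
      rw [← commutatorElement_def, ← hn, ← zpow_natCast c 2, ← zpow_mul]; norm_num
    have : a₁ * c⁻¹ * a₁⁻¹ = c⁻¹ * c ^ ((2 : ℤ) * n) := by
      rw [← hn']; group
    have h2 : a₁ * c * a₁⁻¹ = (a₁ * c⁻¹ * a₁⁻¹)⁻¹ := by group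
    rw [h2, this]
    rw [← zpow_neg_one c, ← zpow_add]
    rw [← zpow_neg]
    ring_nf
  -- a₁² commutes with a₁, i.e. c^(2^k x) commutes with a₁
  have hcomm : c ^ (((2 : ℤ) ^ k * x) * ((1 : ℤ) - 2 * n)) = c ^ ((2 : ℤ) ^ k * x) := by
    have e0 : a₁ * a₁ ^ 2 * a₁⁻¹ = a₁ ^ 2 := by group
    rw [ha] at e0
    have e1 : (c ^ (2 ^ k * x : ℕ) : G) = c ^ ((2 : ℤ) ^ k * x) := by
      rw [← zpow_natCast]; push_cast; ring_nf
    rw [e1] at e0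
    calc c ^ (((2 : ℤ) ^ k * x) * ((1 : ℤ) - 2 * n))
        = (c ^ ((1 : ℤ) - 2 * n)) ^ ((2 : ℤ) ^ k * x) := by
          rw [← zpow_mul]; ring_nf
      _ = (a₁ * c * a₁⁻¹) ^ ((2 : ℤ) ^ k * x) := by rw [hconj]
      _ = a₁ * c ^ ((2 : ℤ) ^ k * x) * a₁⁻¹ := conj_zpow
      _ = c ^ ((2 : ℤ) ^ k * x) := e0
  have hkill : c ^ ((2 : ℤ) ^ (k + 1) * (x * n)) = 1 := by
    have : c ^ (((2 : ℤ) ^ k * x) * ((1 : ℤ) - 2 * n) - (2 : ℤ) ^ k * x) = 1 := by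
      rw [zpow_sub, hcomm, mul_inv_eq_one]
    have e : ((2 : ℤ) ^ k * x) * ((1 : ℤ) - 2 * n) - (2 : ℤ) ^ k * x
        = -((2 : ℤ) ^ (k + 1) * (x * n)) := by ring
    rw [e, zpow_neg, inv_eq_one] at this
    exact this
  -- a₁ ^ 4 = c ^ (2^(k+1) * x)
  have ha4 : a₁ ^ 4 = (c ^ (2 : ℕ) ^ (k + 1)) ^ x := by
    have : a₁ ^ 4 = (a₁ ^ 2) ^ 2 := by group
    rw [this, ha, ← pow_mul, ← pow_mul]
    ring_nf
  rcases Int.even_or_odd n with ⟨n', hn'⟩ | hodd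
  · -- n even: c ^ 2 = 1
    have hu : Odd ((2 : ℤ) * m - (1 + 2 * n')) := by
      refine ⟨m - n' - 1, by ring⟩
    have h2 : c ^ ((2 : ℤ) ^ 1 * ((2 : ℤ) * m - (1 + 2 * n'))) = 1 := by
      have e : (2 : ℤ) ^ 1 * ((2 : ℤ) * m - (1 + 2 * n'))
          = (4 : ℤ) * m - (2 + 2 * n) := by rw [hn']; ring
      rw [e]; exact hrel
    have := pow_two_pow_eq_one_of_zpow_odd c s 1 _ hs hu h2
    have hc2one : c ^ (2 : ℕ) = 1 := by simpa using this
    have : c ^ (2 : ℕ) ^ (k + 1) = 1 := by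
      have h2k : (2 : ℕ) ^ (k + 1) = 2 * 2 ^ k := by ring
      rw [h2k, pow_mul, hc2one, one_pow]
    rw [ha4, this, one_pow]
  · -- n odd: c ^ 2^(k+1) = 1
    have hu : Odd ((x : ℤ) * n) := (Int.odd_coe_nat x |>.mpr hx).mul hodd
    have := pow_two_pow_eq_one_of_zpow_odd c s (k + 1) _ hs hu hkill
    rw [ha4, this, one_pow]
end
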